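/- (Recursion inequality (18) in Theorem 3) Let ω ∈ (0,2) and θ ≥ 0 be such that δ = 2θ/ω + ((2−ω)/ω)·minᵢ Dᵢᵢ > 0. Let x* be a global minimizer of f, let z be a triangle-proximal point of x, suppose ‖x‖ ≤ R and ‖x*‖ ≤ R, and suppose the error bound ‖x − x*‖ ≤ η·‖x − z‖ holds for some constant η > 0. Then f(z) − f(x*) ≤ C₃·√(f(x) − f(z)) + C₄·(f(x) − f(z)), where C₃ = 2R‖C‖·√(2/δ) and C₄ = (2/δ)·(‖C‖ + (η² + 1)‖A‖). -/

import Mathlib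

open scoped RealInnerProductSpace
open Matrix Filter

noncomputable section

/-- Euclidean space ℝⁿ. -/
abbrev E (n : ℕ) := EuclideanSpace ℝ (Fin n)

/-- Matrix-vector multiplication, valued in Euclidean space. -/
def mulVecE {n : ℕ} (M : Matrix (Fin n) (Fin n) ℝ) (x : E n) : E n :=
  (WithLp.equiv 2 (Fin n → ℝ)).symm (M.mulVec ((WithLp.equiv 2 (Fin n → ℝ)) x))

/-- Operator (spectral) norm of a matrix. -/
def opNorm {n : ℕ} (M : Matrix (Fin n) (Fin n) ℝ) : ℝ :=
  ‖Matrix.toEuclideanCLM (𝕜 := ℝ) M‖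

/-- The diagonal part `D` of `A`. -/
def Dmat {n : ℕ} (A : Matrix (Fin n) (Fin n) ℝ) : Matrix (Fin n) (Fin n) ℝ :=
  Matrix.diagonal fun i => A i i

/-- The strictly lower triangular part `L` of `A`. -/
def Lmat {n : ℕ} (A : Matrix (Fin n) (Fin n) ℝ) : Matrix (Fin n) (Fin n) ℝ :=
  Matrix.of fun i j => if (j : ℕ) < (i : ℕ) then A i j else 0

/-- `B = L + (1/ω)(D + θI)`. -/
def Bmat {n : ℕ} (ω θ : ℝ) (A : Matrix (Fin n) (Fin n) ℝ) : Matrix (Fin n) (Fin n) ℝ :=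
  Lmat A + ω⁻¹ • (Dmat A + θ • (1 : Matrix (Fin n) (Fin n) ℝ))

/-- `C = Lᵀ + (1/ω)((ω−1)D − θI)`. -/
def Cmat {n : ℕ} (ω θ : ℝ) (A : Matrix (Fin n) (Fin n) ℝ) : Matrix (Fin n) (Fin n) ℝ :=
  (Lmat A)ᵀ + ω⁻¹ • ((ω - 1) • Dmat A - θ • (1 : Matrix (Fin n) (Fin n) ℝ))

/-- `v` is a subgradient of `h` at `z`. -/
def IsSubgradient {n : ℕ} (h : E n → ℝ) (v z : E n) : Prop :=
  ∀ y, h z + ⟪v, y - z⟫ ≤ h y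

/-- The composite objective `f(x) = (1/2)⟨x, Ax⟩ + ⟨b, x⟩ + h(x)`. -/
def fObj {n : ℕ} (A : Matrix (Fin n) (Fin n) ℝ) (b : E n) (h : E n → ℝ) (x : E n) : ℝ :=
  (1/2) * ⟪x, mulVecE A x⟫ + ⟪b, x⟫ + h x

/-- `z` is a triangle-proximal point of `x`: there is a subgradient `v` of `h` at `z`
with `Bz + b + Cx + v = 0`. -/
def IsTriangleProx {n : ℕ} (ω θ : ℝ) (A : Matrix (Fin n) (Fin n) ℝ) (b : E n)
    (h : E n → ℝ) (x z : E n) : Prop :=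
  ∃ v, IsSubgradient h v z ∧
    mulVecE (Bmat ω θ A) z + b + mulVecE (Cmat ω θ A) x + v = 0

/-! The triangle-proximal condition says, since `B = A - C`, that `-(Az + b + C(x - z))` is a
subgradient of `h` at `z`. Together with the exact second-order expansion of the quadratic part
this gives `f x - f z ≥ ½⟪x - z, (B - C)(x - z)⟫ ≥ (δ/2)‖x - z‖²` (the skew part `L - Lᵀ` of
`B - C` contributes nothing) and `f z - f u ≤ ⟪C(x - z), u - z⟫ - ½⟪u - z, A(u - z)⟫` for every
`u`. For `u = x*`, Cauchy–Schwarz with `‖x - x*‖ ≤ 2R` and `‖x* - z‖ ≤ (η + 1)‖x - z‖` bounds the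
gap by `2R‖C‖‖x - z‖ + (‖C‖ + (η² + 1)‖A‖)‖x - z‖²`, and the first estimate bounds `‖x - z‖` by
`√(2/δ) √(f x - f z)`. -/

section Splitting

variable {F : Type*} [NormedAddCommGroup F] [InnerProductSpace ℝ F]

def quadComposite (A : F →L[ℝ] F) (b : F) (h : F → ℝ) (y : F) : ℝ :=
  1 / 2 * ⟪y, A y⟫ + ⟪b, y⟫ + h y

theorem LinearMap.IsSymmetric.quadratic_sub {A : F →ₗ[ℝ] F} (hA : A.IsSymmetric) (b y z : F) :
    (1 / 2 * ⟪y, A y⟫ + ⟪b, y⟫) - (1 / 2 * ⟪z, A z⟫ + ⟪b, z⟫)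
      = ⟪A z + b, y - z⟫ + 1 / 2 * ⟪y - z, A (y - z)⟫ := by
  have hzy := hA z y
  have hyz : ⟪y, A z⟫ = ⟪A z, y⟫ := real_inner_comm _ _
  have hzz : ⟪z, A z⟫ = ⟪A z, z⟫ := real_inner_comm _ _
  simp only [map_sub, inner_sub_left, inner_sub_right, inner_add_left] at *
  linarith

variable {A B C : F →L[ℝ] F} {b v x z : F} {h : F → ℝ}

theorem sub_inner_le_of_splitting (hBC : B + C = A) (hv : ∀ y, h z + ⟪v, y - z⟫ ≤ h y)
    (hz : B z + b + C x + v = 0) (y : F) :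
    h z - ⟪A z + b + C (x - z), y - z⟫ ≤ h y := by
  have hv' : v = -(A z + b + C (x - z)) := by
    rw [← hBC, eq_neg_iff_add_eq_zero, ← hz, _root_.add_apply, map_sub]
    abel
  have hvy := hv y
  rw [hv', inner_neg_left] at hvy
  linarith

theorem quadComposite_descent (hA : (A : F →ₗ[ℝ] F).IsSymmetric) (hBC : B + C = A)
    (hv : ∀ y, h z + ⟪v, y - z⟫ ≤ h y) (hz : B z + b + C x + v = 0) :
    1 / 2 * ⟪x - z, (B - C) (x - z)⟫ ≤ quadComposite A b h x - quadComposite A b h z := by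
  have hsub := sub_inner_le_of_splitting hBC hv hz x
  have htaylor := hA.quadratic_sub b x z
  have hBC' : ⟪x - z, (B - C) (x - z)⟫ = ⟪x - z, A (x - z)⟫ - 2 * ⟪C (x - z), x - z⟫ := by
    rw [← hBC, _root_.sub_apply, _root_.add_apply, inner_sub_right, inner_add_right,
      real_inner_comm (C (x - z)) (x - z)]
    ring
  rw [inner_add_left] at hsub
  simp only [quadComposite, ContinuousLinearMap.coe_coe] at *
  linarith

theorem quadComposite_sub_le (hA : (A : F →ₗ[ℝ] F).IsSymmetric) (hBC : B + C = A)
    (hv : ∀ y, h z + ⟪v, y - z⟫ ≤ h y) (hz : B z + b + C x + v = 0) (u : F) :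
    quadComposite A b h z - quadComposite A b h u
      ≤ ⟪C (x - z), u - z⟫ - 1 / 2 * ⟪u - z, A (u - z)⟫ := by
  have hsub := sub_inner_le_of_splitting hBC hv hz u
  have htaylor := hA.quadratic_sub b u z
  rw [inner_add_left] at hsub
  simp only [quadComposite, ContinuousLinearMap.coe_coe] at *
  linarith

theorem quadComposite_sub_le_of_norm_le (hA : (A : F →ₗ[ℝ] F).IsSymmetric) (hBC : B + C = A)
    (hv : ∀ y, h z + ⟪v, y - z⟫ ≤ h y) (hz : B z + b + C x + v = 0) {u : F} {R η : ℝ}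
    (hxR : ‖x‖ ≤ R) (huR : ‖u‖ ≤ R) (herr : ‖x - u‖ ≤ η * ‖x - z‖) :
    quadComposite A b h z - quadComposite A b h u
      ≤ 2 * R * ‖C‖ * ‖x - z‖ + (‖C‖ + (η ^ 2 + 1) * ‖A‖) * ‖x - z‖ ^ 2 := by
  set t := ‖x - z‖
  have huz : ‖u - z‖ ≤ t + ‖x - u‖ := by
    simpa only [sub_sub_sub_cancel_left] using norm_sub_le (x - z) (x - u)
  have hCterm : ⟪C (x - z), u - z⟫ ≤ ‖C‖ * t * (t + 2 * R) := by
    have hxu : ‖x - u‖ ≤ 2 * R := by linarith [norm_sub_le x u]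
    refine (real_inner_le_norm _ _).trans (mul_le_mul (C.le_opNorm _) (by linarith) ?_ ?_) <;>
      positivity
  have hAterm : -⟪u - z, A (u - z)⟫ ≤ ‖A‖ * ((η + 1) * t) ^ 2 :=
    calc -⟪u - z, A (u - z)⟫ ≤ ‖u - z‖ * ‖A (u - z)‖ :=
          (neg_le_abs _).trans (abs_real_inner_le_norm _ _)
      _ ≤ ‖u - z‖ * (‖A‖ * ‖u - z‖) := by gcongr; exact A.le_opNorm _
      _ = ‖A‖ * ‖u - z‖ ^ 2 := by ring
      _ ≤ ‖A‖ * ((η + 1) * t) ^ 2 := by gcongr; linarith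
  have hη : (η + 1) ^ 2 ≤ 2 * (η ^ 2 + 1) := by nlinarith [sq_nonneg (η - 1)]
  have hηA := mul_le_mul_of_nonneg_left hη (by positivity : 0 ≤ ‖A‖ * t ^ 2)
  have hgap := quadComposite_sub_le hA hBC hv hz u
  linarith

end Splitting

theorem mul_add_mul_sq_le_of_sq_le {a c κ t Δ : ℝ} (ha : 0 ≤ a) (hc : 0 ≤ c) (hκ : 0 ≤ κ)
    (htΔ : t ^ 2 ≤ κ * Δ) : a * t + c * t ^ 2 ≤ a * √κ * √Δ + κ * c * Δ := by
  have ht : t ≤ √κ * √Δ := by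
    rw [← Real.sqrt_mul hκ]
    exact Real.le_sqrt_of_sq_le htΔ
  rw [mul_assoc a, mul_comm κ, mul_assoc c]
  gcongr

theorem Matrix.IsSymm.isSymmetric_toEuclideanCLM {ι : Type*} [Fintype ι] [DecidableEq ι]
    {A : Matrix ι ι ℝ} (hA : A.IsSymm) :
    (toEuclideanCLM (𝕜 := ℝ) A : EuclideanSpace ℝ ι →ₗ[ℝ] EuclideanSpace ℝ ι).IsSymmetric :=
  isSymmetric_toEuclideanLin_iff.mpr (isHermitian_iff_isSymm.mpr hA)

theorem iInf_mul_dotProduct_self_le {ι : Type*} [Fintype ι] [DecidableEq ι] (d w : ι → ℝ) :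
    (⨅ i, d i) * (w ⬝ᵥ w) ≤ w ⬝ᵥ (diagonal d *ᵥ w) := by
  rw [dotProduct, dotProduct, Finset.mul_sum]
  refine Finset.sum_le_sum fun i _ => ?_
  rw [mulVec_diagonal]
  nlinarith [ciInf_le (Finite.bddBelow_range d) i, mul_self_nonneg (w i)]

section SOR

variable {n : ℕ} {A : Matrix (Fin n) (Fin n) ℝ} {ω θ : ℝ}

theorem fObj_eq_quadComposite (b : E n) (h : E n → ℝ) :
    fObj A b h = quadComposite (toEuclideanCLM (𝕜 := ℝ) A) b h :=
  rfl

theorem Lmat_add_Dmat_add_transpose (hA : A.IsSymm) : Lmat A + Dmat A + (Lmat A)ᵀ = A := by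
  ext i j
  have hs : A j i = A i j := congrFun (congrFun hA i) j
  simp only [Matrix.add_apply, Lmat, Dmat, Matrix.transpose_apply, Matrix.of_apply,
    Matrix.diagonal_apply]
  rcases lt_trichotomy i j with hij | rfl | hij
  · simp [hij, hij.ne, not_lt.mpr hij.le, hs]
  · simp
  · simp [hij, hij.ne', not_lt.mpr hij.le]

theorem Bmat_add_Cmat (hA : A.IsSymm) (hω : ω ≠ 0) : Bmat ω θ A + Cmat ω θ A = A := by
  calc Bmat ω θ A + Cmat ω θ A = Lmat A + (ω⁻¹ * ω) • Dmat A + (Lmat A)ᵀ := by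
        rw [Bmat, Cmat]; module
    _ = A := by rw [inv_mul_cancel₀ hω, one_smul, Lmat_add_Dmat_add_transpose hA]

theorem Bmat_sub_Cmat :
    Bmat ω θ A - Cmat ω θ A
      = (Lmat A - (Lmat A)ᵀ) + ω⁻¹ • ((2 - ω) • Dmat A + (2 * θ) • (1 : Matrix (Fin n) (Fin n) ℝ)) := by
  rw [Bmat, Cmat]; module

theorem mul_dotProduct_self_le_Bmat_sub_Cmat (hω0 : 0 < ω) (hω2 : ω ≤ 2) (w : Fin n → ℝ) :
    (2 * θ / ω + (2 - ω) / ω * ⨅ i, A i i) * (w ⬝ᵥ w)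
      ≤ w ⬝ᵥ (Bmat ω θ A - Cmat ω θ A) *ᵥ w := by
  have hskew : w ⬝ᵥ (Lmat A - (Lmat A)ᵀ) *ᵥ w = 0 := by
    rw [sub_mulVec, dotProduct_sub, dotProduct_transpose_mulVec, sub_self]
  have hsplit : w ⬝ᵥ (Bmat ω θ A - Cmat ω θ A) *ᵥ w
      = ((2 - ω) / ω) * (w ⬝ᵥ Dmat A *ᵥ w) + 2 * θ / ω * (w ⬝ᵥ w) := by
    rw [Bmat_sub_Cmat, add_mulVec, dotProduct_add, hskew, smul_mulVec, add_mulVec, smul_mulVec,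
      smul_mulVec, one_mulVec, dotProduct_smul, dotProduct_add, dotProduct_smul, dotProduct_smul]
    simp only [smul_eq_mul]
    ring
  have hdiag := iInf_mul_dotProduct_self_le (fun i => A i i) w
  have hcoef : 0 ≤ (2 - ω) / ω := div_nonneg (by linarith) hω0.le
  rw [hsplit, Dmat]
  nlinarith [mul_le_mul_of_nonneg_left hdiag hcoef]

theorem mul_norm_sq_le_inner_Bmat_sub_Cmat (hω0 : 0 < ω) (hω2 : ω ≤ 2) (w : E n) :
    (2 * θ / ω + (2 - ω) / ω * ⨅ i, A i i) * ‖w‖ ^ 2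
      ≤ ⟪w, (toEuclideanCLM (𝕜 := ℝ) (Bmat ω θ A) - toEuclideanCLM (𝕜 := ℝ) (Cmat ω θ A)) w⟫ := by
  rw [← map_sub, inner_toEuclideanCLM, ← real_inner_self_eq_norm_sq,
    EuclideanSpace.inner_eq_star_dotProduct, star_trivial]
  exact mul_dotProduct_self_le_Bmat_sub_Cmat hω0 hω2 w.ofLp

end SOR

theorem msm_recursion_inequality_thm3_general {n : ℕ}
    (A : Matrix (Fin n) (Fin n) ℝ) (hA : A.IsSymm) (b : E n) (h : E n → ℝ)
    (ω θ : ℝ) (hω : ω ∈ Set.Ioo (0 : ℝ) 2)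
    (δ : ℝ) (hδ : δ = 2 * θ / ω + (2 - ω) / ω * ⨅ i, A i i) (hδpos : 0 < δ)
    (xstar : E n)
    (x z : E n) (hz : IsTriangleProx ω θ A b h x z)
    (R : ℝ) (hxR : ‖x‖ ≤ R) (hxstarR : ‖xstar‖ ≤ R)
    (η : ℝ) (herr : ‖x - xstar‖ ≤ η * ‖x - z‖)
    (C₃ C₄ : ℝ)
    (hC₃ : C₃ = 2 * R * opNorm (Cmat ω θ A) * Real.sqrt (2 / δ))
    (hC₄ : C₄ = (2 / δ) * (opNorm (Cmat ω θ A) + (η ^ 2 + 1) * opNorm A)) :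
    fObj A b h z - fObj A b h xstar
      ≤ C₃ * Real.sqrt (fObj A b h x - fObj A b h z)
        + C₄ * (fObj A b h x - fObj A b h z) := by
  obtain ⟨v, hv, hzv⟩ := hz
  have hsymm := hA.isSymmetric_toEuclideanCLM
  have hBC : toEuclideanCLM (𝕜 := ℝ) (Bmat ω θ A) + toEuclideanCLM (𝕜 := ℝ) (Cmat ω θ A)
      = toEuclideanCLM (𝕜 := ℝ) A := by
    rw [← map_add, Bmat_add_Cmat hA hω.1.ne']
  rw [fObj_eq_quadComposite, hC₃, hC₄]
  unfold opNorm
  set f := quadComposite (toEuclideanCLM (𝕜 := ℝ) A) b h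
  have hdescent : ‖x - z‖ ^ 2 ≤ 2 / δ * (f x - f z) := by
    have hdec := quadComposite_descent hsymm hBC hv hzv
    have hcoer := mul_norm_sq_le_inner_Bmat_sub_Cmat (A := A) (θ := θ) hω.1 hω.2.le (x - z)
    rw [← hδ] at hcoer
    rw [div_mul_eq_mul_div, le_div_iff₀ hδpos]
    linarith
  have hR : 0 ≤ R := (norm_nonneg x).trans hxR
  exact (quadComposite_sub_le_of_norm_le hsymm hBC hv hzv hxR hxstarR herr).trans
    (mul_add_mul_sq_le_of_sq_le (by positivity) (by positivity)
      (div_pos two_pos hδpos).le hdescent)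

/-- recursion inequality (18) in Theorem 3. -/
theorem msm_recursion_inequality_thm3 {n : ℕ} (hn : 0 < n)
    (A : Matrix (Fin n) (Fin n) ℝ) (hA : A.IsSymm) (b : E n) (h : E n → ℝ)
    (ω θ : ℝ) (hω : ω ∈ Set.Ioo (0 : ℝ) 2) (hθ : 0 ≤ θ)
    (δ : ℝ) (hδ : δ = 2 * θ / ω + (2 - ω) / ω * ⨅ i, A i i) (hδpos : 0 < δ)
    (xstar : E n) (hxstar : ∀ y : E n, fObj A b h xstar ≤ fObj A b h y)
    (x z : E n) (hz : IsTriangleProx ω θ A b h x z)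
    (R : ℝ) (hR : 0 < R) (hxR : ‖x‖ ≤ R) (hxstarR : ‖xstar‖ ≤ R)
    (η : ℝ) (hη : 0 < η) (herr : ‖x - xstar‖ ≤ η * ‖x - z‖)
    (C₃ C₄ : ℝ)
    (hC₃ : C₃ = 2 * R * opNorm (Cmat ω θ A) * Real.sqrt (2 / δ))
    (hC₄ : C₄ = (2 / δ) * (opNorm (Cmat ω θ A) + (η ^ 2 + 1) * opNorm A)) :
    fObj A b h z - fObj A b h xstar
      ≤ C₃ * Real.sqrt (fObj A b h x - fObj A b h z)
        + C₄ * (fObj A b h x - fObj A b h z) :=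
  msm_recursion_inequality_thm3_general A hA b h ω θ hω δ hδ hδpos xstar x z hz R hxR hxstarR η herr
    C₃ C₄ hC₃ hC₄
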